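/- arXiv:1303.1415 — 3 statements merged into one kernel-verified Lean document; each statement's English description precedes it below -/
import Mathlib

section
/- Assume E and C have the splitting property and satisfy (EC-3)(i). Let u ∈ X with u ≠ 0 and let (w_n) be a sequence in X with w_n ≠ 0 for all n converging weakly to 0. Then there is a subsequence along which Λ(u + w_n) and Λ(w_n) converge and lim Λ(u + w_n) ≥ min( Λ(u), lim Λ(w_n) ). -/
/-!
Write `E (u + w n) = (E (u + w n) - E (w n)) + E (w n)` and likewise for `C`. By splitting,
`(E (u + w n) - E (w n)) / (C (u + w n) - C (w n)) → Λ u`, and the mediant inequality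
`min (x / p) (y / q) ≤ (x + y) / (p + q)` (for `p, q > 0`) gives
`Λ (u + w n) ≥ min (that quotient) (Λ (w n))`. Along a subsequence on which `Λ (u + w n)` and
`Λ (w n)` converge in the compact space `EReal`, the inequality passes to the limit.
-/

open Filter Topology

variable {X : Type*}

/-- A sequence converges weakly to `0` in a normed space: every continuous
linear functional applied to it tends to `0`. -/
def WeakToZero [NormedAddCommGroup X] [NormedSpace ℝ X] (w : ℕ → X) : Prop :=
  ∀ f : X →L[ℝ] ℝ, Filter.Tendsto (fun n => f (w n)) atTop (𝓝 0)

/-- A functional `F : X → ℝ` has the splitting property: whenever `w n ⇀ 0`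
weakly, `F (u + w n) = F u + F (w n) + o(1)`. -/
def SplittingProp [NormedAddCommGroup X] [NormedSpace ℝ X] (F : X → ℝ) : Prop :=
  ∀ (u : X) (w : ℕ → X), WeakToZero w →
    Filter.Tendsto (fun n => F (u + w n) - F u - F (w n)) atTop (𝓝 0)

lemma min_div_le_add_div_add {𝕜 : Type*} [Field 𝕜] [LinearOrder 𝕜] [IsStrictOrderedRing 𝕜]
    {x y p q : 𝕜} (hp : 0 < p) (hq : 0 < q) :
    min (x / p) (y / q) ≤ (x + y) / (p + q) := by
  rcases le_total (x / p) (y / q) with h | h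
  · rw [min_eq_left h, div_le_div_iff₀ hp (by positivity)]
    rw [div_le_div_iff₀ hp hq] at h
    nlinarith
  · rw [min_eq_right h, div_le_div_iff₀ hq (by positivity)]
    rw [div_le_div_iff₀ hq hp] at h
    nlinarith

lemma SplittingProp.tendsto_sub_apply [NormedAddCommGroup X] [NormedSpace ℝ X] {F : X → ℝ}
    (hF : SplittingProp F) (u : X) {w : ℕ → X} (hw : WeakToZero w) :
    Tendsto (fun n => F (u + w n) - F (w n)) atTop (𝓝 (F u)) := by
  rw [← tendsto_sub_nhds_zero_iff]
  simpa only [sub_right_comm] using hF u w hw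

lemma SplittingProp.exists_tendsto_min_le_div_add
    [NormedAddCommGroup X] [NormedSpace ℝ X] {E C : X → ℝ}
    (hE : SplittingProp E) (hC : SplittingProp C) {u : X} (hCu : 0 < C u)
    {w : ℕ → X} (hw : WeakToZero w) (hCw : ∀ n, 0 < C (w n)) :
    ∃ r : ℕ → ℝ, Tendsto r atTop (𝓝 (E u / C u)) ∧
      ∀ᶠ n in atTop, min (r n) (E (w n) / C (w n)) ≤ E (u + w n) / C (u + w n) := by
  have hEsub := hE.tendsto_sub_apply u hw
  have hCsub := hC.tendsto_sub_apply u hw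
  refine ⟨fun n => (E (u + w n) - E (w n)) / (C (u + w n) - C (w n)),
    hEsub.div hCsub hCu.ne', ?_⟩
  filter_upwards [hCsub.eventually_const_lt hCu] with n hn
  simpa only [sub_add_cancel] using
    min_div_le_add_div_add (x := E (u + w n) - E (w n)) (y := E (w n)) hn (hCw n)

lemma EReal.min_coe_le_of_tendsto {ι : Type*} {l : Filter ι} [l.NeBot] {r a b : ι → ℝ} {ℓ : ℝ}
    {L L' : EReal} (hr : Tendsto r l (𝓝 ℓ)) (ha : Tendsto (fun n => (a n : EReal)) l (𝓝 L'))
    (hb : Tendsto (fun n => (b n : EReal)) l (𝓝 L)) (h : ∀ᶠ n in l, min (r n) (a n) ≤ b n) :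
    min (ℓ : EReal) L' ≤ L :=
  le_of_tendsto_of_tendsto ((EReal.tendsto_coe.2 hr).min ha) hb <|
    h.mono fun _ hn =>
      EReal.coe_strictMono.monotone.map_min.symm.trans_le (EReal.coe_le_coe_iff.2 hn)

theorem lam_liminf_splitting_general
    [NormedAddCommGroup X] [InnerProductSpace ℝ X]
    (E C : X → ℝ) (a s : ℝ)
    (hEsplit : SplittingProp E) (hCsplit : SplittingProp C)
    (hEC3i : ∀ u : X, u ≠ 0 → 0 < C u ∧ 0 < E u + a * C u ^ s)
    (u : X) (hu : u ≠ 0) (w : ℕ → X) (hw : ∀ n, w n ≠ 0) (hw0 : WeakToZero w) :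
    ∃ φ : ℕ → ℕ, StrictMono φ ∧ ∃ L L' : EReal,
      Filter.Tendsto (fun k => ((E (u + w (φ k)) / C (u + w (φ k)) : ℝ) : EReal))
        atTop (𝓝 L) ∧
      Filter.Tendsto (fun k => ((E (w (φ k)) / C (w (φ k)) : ℝ) : EReal))
        atTop (𝓝 L') ∧
      min ((E u / C u : ℝ) : EReal) L' ≤ L := by
  obtain ⟨r, hr, hmin⟩ := hEsplit.exists_tendsto_min_le_div_add hCsplit (hEC3i u hu).1 hw0
    fun n => (hEC3i (w n) (hw n)).1
  obtain ⟨⟨L, L'⟩, φ, hφ, hlim⟩ := CompactSpace.tendsto_subseq fun n =>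
    (((E (u + w n) / C (u + w n) : ℝ) : EReal), ((E (w n) / C (w n) : ℝ) : EReal))
  have hφ' := hφ.tendsto_atTop
  exact ⟨φ, hφ, L, L', hlim.fst_nhds, hlim.snd_nhds, EReal.min_coe_le_of_tendsto
    (hr.comp hφ') hlim.snd_nhds hlim.fst_nhds (hφ'.eventually hmin)⟩

/-- Assume `E` and `C` have the splitting property and satisfy
(EC-3)(i).  Let `u ≠ 0` and let `w n ≠ 0` converge weakly to `0`.  Then there is a
subsequence along which `Λ(u + w n)` and `Λ(w n)` converge (in the extended reals)
and `lim Λ(u + w n) ≥ min (Λ u) (lim Λ(w n))`, where `Λ v = E v / C v`. -/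
theorem lam_liminf_splitting
    [NormedAddCommGroup X] [InnerProductSpace ℝ X] [CompleteSpace X]
    (E C : X → ℝ) (a s : ℝ) (ha : 0 < a) (hs : 1 < s)
    (hEsplit : SplittingProp E) (hCsplit : SplittingProp C)
    (hEC3i : ∀ u : X, u ≠ 0 → 0 < C u ∧ 0 < E u + a * C u ^ s)
    (u : X) (hu : u ≠ 0) (w : ℕ → X) (hw : ∀ n, w n ≠ 0) (hw0 : WeakToZero w) :
    ∃ φ : ℕ → ℕ, StrictMono φ ∧ ∃ L L' : EReal,
      Filter.Tendsto (fun k => ((E (u + w (φ k)) / C (u + w (φ k)) : ℝ) : EReal))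
        atTop (𝓝 L) ∧
      Filter.Tendsto (fun k => ((E (w (φ k)) / C (w (φ k)) : ℝ) : EReal))
        atTop (𝓝 L') ∧
      min ((E u / C u : ℝ) : EReal) L' ≤ L :=
  lam_liminf_splitting_general E C a s hEsplit hCsplit hEC3i u hu w hw hw0
end

section
/- Assume E and C satisfy (EC-3)(i) with constants a > 0 and s > 1. Then for every δ > 0 and every u ∈ X with u ≠ 0, J_δ(u) ≥ (δ/2)Φ(u) − M_δ, where M_δ = −a · min_{t ≥ 0} ( (δ/2)t^s − t^{s−1} ) (this minimum is finite and nonpositive, so M_δ ≥ 0). -/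
open Filter Topology

/-!
Write `f(t) = (δ/2) t^s − t^(s−1) = t^(s−1) ((δ/2) t − 1)`. For `t ≥ 2/δ` it is nonnegative and for
`t ≤ 2/δ` it is at least `−(2/δ)^(s−1)`, so its infimum over `t ≥ 0` is finite, and `f(0) = 0`
makes it nonpositive. For `u ≠ 0` put `c = C u > 0`; dividing `E u > −a c^s` by `c` gives
`Λ u ≥ −a c^(s−1)`, while `Φ u ≥ E u + a c^s + a c^s > a c^s`. Hence
`J_δ u − (δ/2) Φ u = Λ u + (δ/2) Φ u ≥ a f(c) ≥ a inf f`.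
-/

namespace Real

theorem neg_rpow_le_mul_rpow_sub_rpow_sub_one {δ s t : ℝ} (hδ : 0 < δ) (hs : 1 ≤ s)
    (ht : 0 ≤ t) : -(2 / δ) ^ (s - 1) ≤ δ / 2 * t ^ s - t ^ (s - 1) := by
  have hpow_nonneg : 0 ≤ t ^ (s - 1) := rpow_nonneg ht _
  rcases le_or_gt t (2 / δ) with hsmall | hlarge
  · have : t ^ (s - 1) ≤ (2 / δ) ^ (s - 1) := rpow_le_rpow ht hsmall (by linarith)
    have : 0 ≤ δ / 2 * t ^ s := mul_nonneg (by positivity) (rpow_nonneg ht s)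
    linarith
  · have ht_pos : 0 < t := lt_trans (by positivity) hlarge
    have hfactor : δ / 2 * t ^ s - t ^ (s - 1) = t ^ (s - 1) * (δ / 2 * t - 1) := by
      rw [rpow_sub_one ht_pos.ne']
      field_simp
    have : 1 < δ / 2 * t := by
      rw [div_lt_iff₀ hδ] at hlarge
      linarith
    have : 0 ≤ (2 / δ) ^ (s - 1) := rpow_nonneg (by positivity) _
    nlinarith

theorem bddBelow_mul_rpow_sub_rpow_sub_one {δ s : ℝ} (hδ : 0 < δ) (hs : 1 ≤ s) :
    BddBelow ((fun t : ℝ => δ / 2 * t ^ s - t ^ (s - 1)) '' Set.Ici 0) :=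
  ⟨_, Set.forall_mem_image.2 fun _ ht => neg_rpow_le_mul_rpow_sub_rpow_sub_one hδ hs ht⟩

theorem zero_mem_image_mul_rpow_sub_rpow_sub_one (δ : ℝ) {s : ℝ} (hs : 1 < s) :
    (0 : ℝ) ∈ (fun t : ℝ => δ / 2 * t ^ s - t ^ (s - 1)) '' Set.Ici 0 :=
  ⟨0, Set.self_mem_Ici, by
    simp [zero_rpow (by linarith : s ≠ 0), zero_rpow (by linarith : s - 1 ≠ 0)]⟩

end Real

theorem mul_rpow_sub_rpow_sub_one_le {E c a s δ : ℝ} (hc : 0 < c) (hE : 0 < E + a * c ^ s)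
    (hδ : 0 < δ) : a * (δ / 2 * c ^ s - c ^ (s - 1)) ≤ E / c + δ / 2 * (E + 2 * a * c ^ s) := by
  have hratio : -(a * c ^ (s - 1)) ≤ E / c := by
    rw [Real.rpow_sub_one hc.ne', le_div_iff₀ hc]
    field_simp
    linarith
  have : 0 ≤ δ / 2 * (E + a * c ^ s) := by positivity
  linarith

theorem Jdelta_lower_bound_general
    {X : Type*} [NormedAddCommGroup X]
    (E C : X → ℝ) (a s : ℝ) (ha : 0 < a) (hs : 1 < s)
    (hEC3i : ∀ u : X, u ≠ 0 → 0 < C u ∧ 0 < E u + a * C u ^ s)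
    (δ : ℝ) (hδ : 0 < δ) :
    BddBelow ((fun t : ℝ => δ / 2 * t ^ s - t ^ (s - 1)) '' Set.Ici 0) ∧
    sInf ((fun t : ℝ => δ / 2 * t ^ s - t ^ (s - 1)) '' Set.Ici 0) ≤ 0 ∧
    0 ≤ -a * sInf ((fun t : ℝ => δ / 2 * t ^ s - t ^ (s - 1)) '' Set.Ici 0) ∧
    ∀ u : X, u ≠ 0 →
      δ / 2 * (E u + 2 * a * C u ^ s)
          - (-a * sInf ((fun t : ℝ => δ / 2 * t ^ s - t ^ (s - 1)) '' Set.Ici 0))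
        ≤ E u / C u + δ * (E u + 2 * a * C u ^ s) := by
  have hbdd := Real.bddBelow_mul_rpow_sub_rpow_sub_one hδ hs.le
  have hinf_nonpos := csInf_le hbdd (Real.zero_mem_image_mul_rpow_sub_rpow_sub_one δ hs)
  refine ⟨hbdd, hinf_nonpos, by nlinarith, fun u hu => ?_⟩
  obtain ⟨hC, hE⟩ := hEC3i u hu
  have hinf_le := mul_le_mul_of_nonneg_left (csInf_le hbdd ⟨C u, hC.le, rfl⟩) ha.le
  have := mul_rpow_sub_rpow_sub_one_le hC hE hδ
  linarith

/-- Under (EC-3)(i), for every `δ > 0` and every `u ≠ 0`,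
`J_δ(u) ≥ (δ/2) Φ(u) − M_δ`, where `Λ u = E u / C u`, `Φ u = E u + 2a (C u)^s`,
`J_δ u = Λ u + δ Φ u`, and
`M_δ = −a ⬝ inf_{t ≥ 0} ((δ/2) t^s − t^{s−1})`; the infimum is finite (the set of
values is bounded below) and nonpositive, so `M_δ ≥ 0`. -/
theorem Jdelta_lower_bound
    {X : Type*} [NormedAddCommGroup X] [InnerProductSpace ℝ X] [CompleteSpace X]
    (E C : X → ℝ) (a s : ℝ) (ha : 0 < a) (hs : 1 < s)
    (hEC3i : ∀ u : X, u ≠ 0 → 0 < C u ∧ 0 < E u + a * C u ^ s)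
    (δ : ℝ) (hδ : 0 < δ) :
    BddBelow ((fun t : ℝ => δ / 2 * t ^ s - t ^ (s - 1)) '' Set.Ici 0) ∧
    sInf ((fun t : ℝ => δ / 2 * t ^ s - t ^ (s - 1)) '' Set.Ici 0) ≤ 0 ∧
    0 ≤ -a * sInf ((fun t : ℝ => δ / 2 * t ^ s - t ^ (s - 1)) '' Set.Ici 0) ∧
    ∀ u : X, u ≠ 0 →
      δ / 2 * (E u + 2 * a * C u ^ s)
          - (-a * sInf ((fun t : ℝ => δ / 2 * t ^ s - t ^ (s - 1)) '' Set.Ici 0))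
        ≤ E u / C u + δ * (E u + 2 * a * C u ^ s) :=
  Jdelta_lower_bound_general E C a s ha hs hEC3i δ hδ
end

section
/- Let X be a real Hilbert space, G a group acting on X by linear isometries, and V : X → ℝ a continuous, G-invariant functional with V ≥ 0 that is G-compact (every minimizing sequence of V is G-compact). Assume Γ = V^{-1}(0) is nonempty. Then Γ is G-compact, and for every sequence (u_n) in X one has V(u_n) → 0 if and only if dist(u_n, Γ) → 0. -/
/-!
Both `V` and `dist (·, Γ)` are continuous, `G`-invariant and vanish exactly on `Γ`. If every
sequence along which such a function `F` tends to `0` is `G`-compact, then any other such `H`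
tends to `0` along these sequences too: along a subsequence `ρ (g k) (u k) → x`, so `F x = 0` by
continuity and invariance, hence `H x = 0` and `H (u k) = H (ρ (g k) (u k)) → H x = 0`.
Taking `F = V` (minimizing sequences are those with `V → 0`, as `inf V = 0`) gives one
implication. For `F = dist (·, Γ)` one needs that sequences approaching `Γ` are `G`-compact,
which holds because they shadow sequences in `Γ`.
-/

open Filter Topology

noncomputable section

variable {X : Type*} [NormedAddCommGroup X] [InnerProductSpace ℝ X] [CompleteSpace X]
variable {G : Type*} [Group G]

/-- A `G`-compact sequence: some subsequence, translated by group elements,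
converges strongly. -/
def GCompactSeq (ρ : G → X →L[ℝ] X) (u : ℕ → X) : Prop :=
  ∃ φ : ℕ → ℕ, StrictMono φ ∧ ∃ g : ℕ → G, ∃ x : X,
    Filter.Tendsto (fun k => ρ (g k) (u (φ k))) atTop (𝓝 x)

open Metric

theorem exists_seq_mem_tendsto_dist_of_tendsto_infDist {α : Type*} [PseudoMetricSpace α]
    {s : Set α} (hs : s.Nonempty) {u : ℕ → α}
    (hu : Tendsto (fun n => infDist (u n) s) atTop (𝓝 0)) :
    ∃ v : ℕ → α, (∀ n, v n ∈ s) ∧ Tendsto (fun n => dist (u n) (v n)) atTop (𝓝 0) := by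
  have hclose : ∀ n : ℕ, ∃ v ∈ s, dist (u n) v < infDist (u n) s + 1 / (n + 1) := fun n =>
    (infDist_lt_iff hs).mp (lt_add_of_pos_right _ Nat.one_div_pos_of_nat)
  choose v hvs hv using hclose
  refine ⟨v, hvs, squeeze_zero (fun _ => dist_nonneg) (fun n => (hv n).le) ?_⟩
  simpa using hu.add tendsto_one_div_add_atTop_nhds_zero_nat

section IsometricAction

variable {E : Type*} [NormedAddCommGroup E] [Module ℝ E] {ρ : G → E →L[ℝ] E}

theorem apply_one_eq_self (hiso : ∀ g x, ‖ρ g x‖ = ‖x‖)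
    (hmul : ∀ g h x, ρ (g * h) x = ρ g (ρ h x)) (x : E) : ρ 1 x = x :=
  (AddMonoidHomClass.isometry_of_norm _ (hiso 1)).injective (by rw [← hmul, one_mul])

theorem apply_inv_apply (hiso : ∀ g x, ‖ρ g x‖ = ‖x‖)
    (hmul : ∀ g h x, ρ (g * h) x = ρ g (ρ h x)) (g : G) (x : E) : ρ g⁻¹ (ρ g x) = x := by
  rw [← hmul, inv_mul_cancel, apply_one_eq_self hiso hmul]

theorem infDist_apply_eq_of_preimage_eq (hiso : ∀ g x, ‖ρ g x‖ = ‖x‖)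
    (hmul : ∀ g h x, ρ (g * h) x = ρ g (ρ h x)) {s : Set E} (hs : ∀ g, ρ g ⁻¹' s = s)
    (g : G) (x : E) : infDist (ρ g x) s = infDist x s := by
  have himage : ρ g '' s = s := by
    rw [Set.image_eq_preimage_of_inverse (apply_inv_apply hiso hmul g), hs]
    exact fun x => by simpa using apply_inv_apply hiso hmul g⁻¹ x
  rw [← infDist_image (AddMonoidHomClass.isometry_of_norm _ (hiso g)) (x := x), himage]

end IsometricAction

section GCompact

variable {E : Type*} [NormedAddCommGroup E] [InnerProductSpace ℝ E] {ι : Type*}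
  {ρ : ι → E →L[ℝ] E}

theorem GCompactSeq.of_tendsto_dist (hiso : ∀ g x, ‖ρ g x‖ = ‖x‖) {u v : ℕ → E}
    (hv : GCompactSeq ρ v) (huv : Tendsto (fun n => dist (u n) (v n)) atTop (𝓝 0)) :
    GCompactSeq ρ u := by
  obtain ⟨φ, hφ, g, x, hx⟩ := hv
  refine ⟨φ, hφ, g, x, tendsto_iff_dist_tendsto_zero.mpr ?_⟩
  refine squeeze_zero (fun _ => dist_nonneg) (fun k => dist_triangle _ (ρ (g k) (v (φ k))) x) ?_
  simpa [(AddMonoidHomClass.isometry_of_norm _ (hiso _)).dist_eq] using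
    (huv.comp hφ.tendsto_atTop).add (tendsto_iff_dist_tendsto_zero.mp hx)

theorem tendsto_zero_of_gCompactSeq {F H : E → ℝ}
    (hF : ∀ u : ℕ → E, Tendsto (fun n => F (u n)) atTop (𝓝 0) → GCompactSeq ρ u)
    (hFcont : Continuous F) (hFinv : ∀ g x, F (ρ g x) = F x)
    (hHcont : Continuous H) (hHinv : ∀ g x, H (ρ g x) = H x) (hFH : ∀ x, F x = 0 → H x = 0)
    {u : ℕ → E} (hu : Tendsto (fun n => F (u n)) atTop (𝓝 0)) :
    Tendsto (fun n => H (u n)) atTop (𝓝 0) := by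
  refine tendsto_of_subseq_tendsto fun ns hns => ?_
  obtain ⟨φ, hφ, g, x, hx⟩ := hF (u ∘ ns) (hu.comp hns)
  have hFx : F x = 0 :=
    tendsto_nhds_unique ((hFcont.tendsto x).comp hx)
      (by simpa [hFinv, Function.comp_def] using (hu.comp hns).comp hφ.tendsto_atTop)
  refine ⟨φ, ?_⟩
  simpa [hHinv, hFH x hFx, Function.comp_def] using (hHcont.tendsto x).comp hx

end GCompact

/-- **Lemma `LC`.** Let `V ≥ 0` be a continuous, `G`-invariant,
`G`-compact functional whose zero set `Γ = V⁻¹(0)` is nonempty.  Then `Γ` is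
`G`-compact and, for every sequence `(u n)`, `V (u n) → 0` iff
`dist (u n, Γ) → 0`. -/
theorem Gcompact_zero_set
    (ρ : G → X →L[ℝ] X)
    (hiso : ∀ g x, ‖ρ g x‖ = ‖x‖) (hmul : ∀ g h x, ρ (g * h) x = ρ g (ρ h x))
    (V : X → ℝ) (hVcont : Continuous V) (hVnonneg : ∀ u, 0 ≤ V u)
    (hVinv : ∀ g u, V (ρ g u) = V u)
    (hVGcomp : ∀ u : ℕ → X,
        Filter.Tendsto (fun n => V (u n)) atTop (𝓝 (⨅ v : X, V v)) →
        GCompactSeq ρ u)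
    (hΓ : (V ⁻¹' {0}).Nonempty) :
    (∀ u : ℕ → X, (∀ n, u n ∈ V ⁻¹' {0}) → GCompactSeq ρ u) ∧
    (∀ u : ℕ → X,
        Filter.Tendsto (fun n => V (u n)) atTop (𝓝 0) ↔
        Filter.Tendsto (fun n => Metric.infDist (u n) (V ⁻¹' {0})) atTop (𝓝 0)) := by
  set Γ := V ⁻¹' {0}
  obtain ⟨x₀, hx₀⟩ := hΓ
  have hinf : (⨅ v : X, V v) = 0 :=
    le_antisymm (hx₀ ▸ ciInf_le ⟨0, Set.forall_mem_range.mpr hVnonneg⟩ x₀) (le_ciInf hVnonneg)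
  have hVmin : ∀ u : ℕ → X, Tendsto (fun n => V (u n)) atTop (𝓝 0) → GCompactSeq ρ u :=
    fun u => hinf ▸ hVGcomp u
  have hΓcomp : ∀ u : ℕ → X, (∀ n, u n ∈ Γ) → GCompactSeq ρ u := fun u hu =>
    hVmin u (by simp [show ∀ n, V (u n) = 0 from hu])
  have hΓclosed : IsClosed Γ := isClosed_singleton.preimage hVcont
  have hdistinv : ∀ g x, infDist (ρ g x) Γ = infDist x Γ :=
    infDist_apply_eq_of_preimage_eq hiso hmul fun g => by ext; simp [Γ, hVinv]
  have hdistcomp : ∀ u : ℕ → X, Tendsto (fun n => infDist (u n) Γ) atTop (𝓝 0) →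
      GCompactSeq ρ u := fun u hu => by
    obtain ⟨v, hvΓ, huv⟩ := exists_seq_mem_tendsto_dist_of_tendsto_infDist ⟨x₀, hx₀⟩ hu
    exact (hΓcomp v hvΓ).of_tendsto_dist hiso huv
  refine ⟨hΓcomp, fun u => ⟨fun hu => ?_, fun hu => ?_⟩⟩
  · exact tendsto_zero_of_gCompactSeq hVmin hVcont hVinv (continuous_infDist_pt Γ) hdistinv
      (fun x hx => infDist_zero_of_mem hx) hu
  · exact tendsto_zero_of_gCompactSeq hdistcomp (continuous_infDist_pt Γ) hdistinv hVcont hVinv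
      (fun x hx => (hΓclosed.mem_iff_infDist_zero ⟨x₀, hx₀⟩).mpr hx) hu

end
end
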